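/- With notation as above, for a p-torsion A-module M and multiplicative character χ of (A/p)^×, if the subspace G(M,χ) = {g ∈ F_p⊗M : (1⊗a)g = (χ(a)⊗1)g ∀a ∈ A} is nonzero, then the lift χ : A → F_p (extended by 0 on p) is a homomorphism of F-algebras. -/

import Mathlib

/-!
A nonzero `g ∈ G(M,χ)` is a common eigenvector of the operators `1 ⊗ a`, with eigenvalue `χ(a)`.
Since `a ↦ 1 ⊗ a` is a homomorphism of `F`-algebras whose values are `F_p`-linear, and the
eigenvalue belonging to a fixed nonzero vector of an `F_p`-vector space is unique, `a ↦ χ(a)` is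
a homomorphism of `F`-algebras as well.
-/

open TensorProduct

section GaussSetup

variable (F : Type*) [Field F] [Fintype F]
variable {A : Type*} [CommRing A] [Algebra F A]
variable (p : Ideal A) [p.IsMaximal] [Fintype (A ⧸ p)] [DecidableEq (A ⧸ p)]
variable (M : Type*) [AddCommGroup M] [Module A M] [Module (A ⧸ p) M] [Module F M]
variable [IsScalarTower F A M] [IsScalarTower F (A ⧸ p) M]

/-- The lift of a multiplicative character `χ : (A/p)^× → F_p^×` to `F_p = A/p`,
extended by `0` on non-units. -/
noncomputable def chiLift (χ : (A ⧸ p)ˣ →* (A ⧸ p)ˣ) : (A ⧸ p) → (A ⧸ p) :=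
  fun x => if h : IsUnit x then ((χ h.unit : (A ⧸ p)ˣ) : A ⧸ p) else 0

/-- The action of `1 ⊗ a`, `a ∈ A`, on `F_p ⊗_F M`. -/
noncomputable def rightA (a : A) :
    ((A ⧸ p) ⊗[F] M) →ₗ[F] ((A ⧸ p) ⊗[F] M) :=
  LinearMap.lTensor (A ⧸ p) ((LinearMap.lsmul A M a).restrictScalars F)

/-- The space of Gauss–Thakur sums
`G(M,χ) = {g ∈ F_p ⊗ M | (1⊗a)g = (χ(a)⊗1)g for all a ∈ A}`. -/
noncomputable def GaussSpace (χ : (A ⧸ p)ˣ →* (A ⧸ p)ˣ) : Set ((A ⧸ p) ⊗[F] M) :=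
  {g | ∀ a : A, rightA F p M a g = chiLift p χ (Ideal.Quotient.mk p a) • g}

end GaussSetup

section RightAction

variable (F : Type*) [Field F] {A : Type*} [CommRing A] [Algebra F A] (p : Ideal A)
variable (M : Type*) [AddCommGroup M] [Module A M] [Module F M] [IsScalarTower F A M]

/-- Its value at `a` is `rightA F p M a` definitionally. -/
def rightAAlgHom : A →ₐ[F] Module.End F ((A ⧸ p) ⊗[F] M) :=
  (Module.End.lTensorAlgHom F M (A ⧸ p)).comp (Algebra.lsmul F F M)

theorem rightA_one : rightA F p M 1 = 1 := map_one (rightAAlgHom F p M)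

theorem rightA_mul (a b : A) : rightA F p M (a * b) = rightA F p M a * rightA F p M b :=
  map_mul (rightAAlgHom F p M) a b

theorem rightA_add (a b : A) : rightA F p M (a + b) = rightA F p M a + rightA F p M b :=
  map_add (rightAAlgHom F p M) a b

theorem rightA_smul (α : F) (a : A) : rightA F p M (α • a) = α • rightA F p M a :=
  map_smul (rightAAlgHom F p M) α a

theorem rightA_smul_comm (a : A) (c : A ⧸ p) (g : (A ⧸ p) ⊗[F] M) :
    rightA F p M a (c • g) = c • rightA F p M a g :=
  (((LinearMap.lsmul A M a).restrictScalars F).baseChange (A ⧸ p)).map_smul c g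

variable {F p M} [p.IsMaximal] [Fintype (A ⧸ p)] [DecidableEq (A ⧸ p)]

theorem chiLift_eq_of_rightA_eq_smul {χ : (A ⧸ p)ˣ →* (A ⧸ p)ˣ} {g : (A ⧸ p) ⊗[F] M}
    (hg : g ∈ GaussSpace F p M χ) (hg0 : g ≠ 0) {a : A} {c : A ⧸ p}
    (h : rightA F p M a g = c • g) : chiLift p χ (Ideal.Quotient.mk p a) = c :=
  letI := Ideal.Quotient.field p
  smul_left_injective (A ⧸ p) hg0 ((hg a).symm.trans h)

end RightAction

section GaussSetup

variable (F : Type*) [Field F] [Fintype F]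
variable {A : Type*} [CommRing A] [Algebra F A]
variable (p : Ideal A) [p.IsMaximal] [Fintype (A ⧸ p)] [DecidableEq (A ⧸ p)]
variable (M : Type*) [AddCommGroup M] [Module A M] [Module (A ⧸ p) M] [Module F M]
variable [IsScalarTower F A M] [IsScalarTower F (A ⧸ p) M]

theorem stmt11 (χ : (A ⧸ p)ˣ →* (A ⧸ p)ˣ)
    (hne : ∃ g : (A ⧸ p) ⊗[F] M, g ∈ GaussSpace F p M χ ∧ g ≠ 0) :
    (chiLift p χ (Ideal.Quotient.mk p 1) = 1) ∧
    (∀ a b : A, chiLift p χ (Ideal.Quotient.mk p (a * b)) =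
      chiLift p χ (Ideal.Quotient.mk p a) * chiLift p χ (Ideal.Quotient.mk p b)) ∧
    (∀ a b : A, chiLift p χ (Ideal.Quotient.mk p (a + b)) =
      chiLift p χ (Ideal.Quotient.mk p a) + chiLift p χ (Ideal.Quotient.mk p b)) ∧
    (∀ (α : F) (a : A), chiLift p χ (Ideal.Quotient.mk p (α • a)) =
      α • chiLift p χ (Ideal.Quotient.mk p a)) := by
  obtain ⟨g, hg, hg0⟩ := hne
  refine ⟨?_, fun a b => ?_, fun a b => ?_, fun α a => ?_⟩ <;>
    refine chiLift_eq_of_rightA_eq_smul hg hg0 ?_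
  · rw [rightA_one, Module.End.one_apply, one_smul]
  · rw [rightA_mul, Module.End.mul_apply, hg b, rightA_smul_comm, hg a, smul_smul, mul_comm]
  · rw [rightA_add, LinearMap.add_apply, hg a, hg b, add_smul]
  · rw [rightA_smul, LinearMap.smul_apply, hg a, smul_assoc]

end GaussSetup
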